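/- arXiv:1907.02717 — 2 statements merged into one kernel-verified Lean document; each statement's English description precedes it below -/
import Mathlib

section
/- Let {G_N} be a family of weighted undirected graphs with uniformly bounded degrees (each at most q) and edge weights at most w_max, admitting for each N a vertex partition V = X₁ ∪ X₂ ∪ X₃ with no edges between X₁ and X₃. If N₂/N₁ → 0 and N₂/N₃ → 0 as N → ∞, then λ₂(G_N) → 0 as N → ∞. -/
open Matrix Filter

/-- Sorted (ascending) eigenvalues of a Hermitian matrix. -/
noncomputable def sortedEig {N : ℕ} {L : Matrix (Fin N) (Fin N) ℝ}
    (hL : L.IsHermitian) : Fin N → ℝ :=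
  hL.eigenvalues ∘ Tuple.sort hL.eigenvalues

/-- Weighted graph Laplacian. -/
noncomputable def lap {N : ℕ} (w : Fin N → Fin N → ℝ) : Matrix (Fin N) (Fin N) ℝ :=
  Matrix.of fun i j => if i = j then ∑ k, w i k else - w i j

/-!
The Laplacian quadratic form is `½ ∑ᵢⱼ wᵢⱼ (xᵢ - xⱼ)²`; it is positive semidefinite and kills the
constant vector, so by the min-max principle `λ₂ ‖f‖² ≤ fᵀ L f` whenever `∑ f = 0`. Test this with
`f = 1/N₁` on `X₁`, `-1/N₃` on `X₃` and `0` elsewhere. As there are no edges between `X₁` and `X₃`,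
only edges at the at most `N₂` remaining vertices carry energy, at most `q` per vertex, each
contributing at most `w_max (1/N₁ + 1/N₃)²`. With `‖f‖² = 1/N₁ + 1/N₃` this gives
`λ₂ ≤ q w_max (N₂/N₁ + N₂/N₃) → 0`.
-/

namespace Matrix.IsHermitian

variable {n : Type*} [Fintype n] [DecidableEq n] {A : Matrix n n ℝ} (hA : A.IsHermitian)

lemma eigenvectorBasis_dotProduct_mulVec (i : n) (x : n → ℝ) :
    ⇑(hA.eigenvectorBasis i) ⬝ᵥ (A *ᵥ x)
      = hA.eigenvalues i * (⇑(hA.eigenvectorBasis i) ⬝ᵥ x) := by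
  rw [dotProduct_mulVec, ← mulVec_transpose, (isHermitian_iff_isSymm.mp hA).eq,
    hA.mulVec_eigenvectorBasis, smul_dotProduct, smul_eq_mul]

lemma dotProduct_mulVec_eq_sum_eigenvalues (x : n → ℝ) :
    x ⬝ᵥ (A *ᵥ x) = ∑ i, hA.eigenvalues i * (⇑(hA.eigenvectorBasis i) ⬝ᵥ x) ^ 2 := by
  have := hA.eigenvectorBasis.sum_inner_mul_inner (WithLp.toLp 2 x) (WithLp.toLp 2 (A *ᵥ x))
  simp only [EuclideanSpace.inner_eq_star_dotProduct, star_trivial] at this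
  rw [dotProduct_comm, ← this]
  refine Finset.sum_congr rfl fun i _ => ?_
  simp only [dotProduct_comm _ (⇑(hA.eigenvectorBasis i)), eigenvectorBasis_dotProduct_mulVec]
  ring

lemma dotProduct_self_eq_sum_sq (x : n → ℝ) :
    x ⬝ᵥ x = ∑ i, (⇑(hA.eigenvectorBasis i) ⬝ᵥ x) ^ 2 := by
  have := hA.eigenvectorBasis.sum_inner_mul_inner (WithLp.toLp 2 x) (WithLp.toLp 2 x)
  simp only [EuclideanSpace.inner_eq_star_dotProduct, star_trivial] at this
  rw [← this]
  refine Finset.sum_congr rfl fun i _ => ?_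
  simp [dotProduct_comm _ (⇑(hA.eigenvectorBasis i)), sq]

end Matrix.IsHermitian

section SecondEigenvalue

variable {N : ℕ} {A : Matrix (Fin N) (Fin N) ℝ} (hA : A.IsHermitian)

lemma sortedEig_one_mul_le_of_dotProduct_eq_zero (hN : 1 < N) {x : Fin N → ℝ}
    (hx : ⇑(hA.eigenvectorBasis (Tuple.sort hA.eigenvalues ⟨0, by omega⟩)) ⬝ᵥ x = 0) :
    sortedEig hA ⟨1, hN⟩ * (x ⬝ᵥ x) ≤ x ⬝ᵥ (A *ᵥ x) := by
  set σ := Tuple.sort hA.eigenvalues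
  set c : Fin N → ℝ := fun i => ⇑(hA.eigenvectorBasis i) ⬝ᵥ x
  rw [hA.dotProduct_mulVec_eq_sum_eigenvalues, hA.dotProduct_self_eq_sum_sq]
  calc sortedEig hA ⟨1, hN⟩ * ∑ i, c i ^ 2
        = ∑ k, sortedEig hA ⟨1, hN⟩ * c (σ k) ^ 2 := by
        rw [Finset.mul_sum, Equiv.sum_comp σ (fun i => sortedEig hA ⟨1, hN⟩ * c i ^ 2)]
    _ ≤ ∑ k, hA.eigenvalues (σ k) * c (σ k) ^ 2 := by
        refine Finset.sum_le_sum fun k _ => ?_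
        by_cases hk : k = ⟨0, by omega⟩
        · simp [c, hk, hx]
        · have h1k : (⟨1, hN⟩ : Fin N) ≤ k := Fin.mk_le_of_le_val (by grind)
          exact mul_le_mul_of_nonneg_right (Tuple.monotone_sort hA.eigenvalues h1k) (sq_nonneg _)
    _ = ∑ i, hA.eigenvalues i * c i ^ 2 := Equiv.sum_comp σ (fun i => hA.eigenvalues i * c i ^ 2)

/-- The plane spanned by `u` and `f` contains a nonzero vector orthogonal to the bottom
eigenvector, on which the quadratic form only sees the `f`-component. -/
lemma sortedEig_one_mul_le_of_mulVec_eq_zero (hN : 1 < N) (hpsd : A.PosSemidef)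
    {u f : Fin N → ℝ} (hu : A *ᵥ u = 0) (hu0 : u ≠ 0) (huf : u ⬝ᵥ f = 0) :
    sortedEig hA ⟨1, hN⟩ * (f ⬝ᵥ f) ≤ f ⬝ᵥ (A *ᵥ f) := by
  set v : Fin N → ℝ := ⇑(hA.eigenvectorBasis (Tuple.sort hA.eigenvalues ⟨0, by omega⟩))
  set μ := sortedEig hA ⟨1, hN⟩
  by_cases hvu : v ⬝ᵥ u = 0
  · -- `u` itself is then a test vector, forcing `μ ≤ 0`
    have hf_nonneg : 0 ≤ f ⬝ᵥ (A *ᵥ f) := hpsd.dotProduct_mulVec_nonneg f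
    have hu_pos : 0 < u ⬝ᵥ u := by simpa using dotProduct_self_star_pos_iff.mpr hu0
    have := sortedEig_one_mul_le_of_dotProduct_eq_zero hA hN hvu
    rw [hu, dotProduct_zero] at this
    have hμ : μ ≤ 0 := nonpos_of_mul_nonpos_left this hu_pos
    have hff : 0 ≤ f ⬝ᵥ f := by simpa using dotProduct_self_star_nonneg f
    nlinarith
  · set g := (v ⬝ᵥ f) • u - (v ⬝ᵥ u) • f
    have hvg : v ⬝ᵥ g = 0 := by
      simp only [g, dotProduct_sub, dotProduct_smul, smul_eq_mul]; ring
    have huAf : u ⬝ᵥ (A *ᵥ f) = 0 := by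
      rw [dotProduct_mulVec, ← mulVec_transpose, (isHermitian_iff_isSymm.mp hA).eq, hu,
        zero_dotProduct]
    have hgAg : g ⬝ᵥ (A *ᵥ g) = (v ⬝ᵥ u) ^ 2 * (f ⬝ᵥ (A *ᵥ f)) := by
      simp only [g, mulVec_sub, mulVec_smul, hu, smul_zero, zero_sub, dotProduct_neg,
        dotProduct_smul, sub_dotProduct, smul_dotProduct, huAf, smul_eq_mul]
      ring
    have hgg : g ⬝ᵥ g = (v ⬝ᵥ f) ^ 2 * (u ⬝ᵥ u) + (v ⬝ᵥ u) ^ 2 * (f ⬝ᵥ f) := by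
      simp only [g, dotProduct_sub, sub_dotProduct, dotProduct_smul, smul_dotProduct,
        smul_eq_mul, dotProduct_comm f u, huf]
      ring
    have hμ : 0 ≤ μ := hpsd.eigenvalues_nonneg _
    have := sortedEig_one_mul_le_of_dotProduct_eq_zero hA hN hvg
    rw [hgAg, hgg] at this
    have huu : 0 ≤ u ⬝ᵥ u := by simpa using dotProduct_self_star_nonneg u
    refine le_of_mul_le_mul_left ?_ (by positivity : 0 < (v ⬝ᵥ u) ^ 2)
    nlinarith [mul_nonneg hμ (mul_nonneg (sq_nonneg (v ⬝ᵥ f)) huu)]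

end SecondEigenvalue

section Laplacian

variable {N : ℕ} {w : Fin N → Fin N → ℝ}

lemma lap_mulVec_apply (hdiag : ∀ i, w i i = 0) (x : Fin N → ℝ) (i : Fin N) :
    (lap w *ᵥ x) i = ∑ j, w i j * (x i - x j) := by
  have hrow : ∀ j, lap w i j = (if i = j then ∑ k, w i k else 0) - w i j := by
    intro j
    by_cases hij : i = j
    · simp [lap, hij, hdiag]
    · simp [lap, hij]
  simp only [mulVec, dotProduct, hrow, sub_mul, ite_mul, zero_mul, Finset.sum_sub_distrib,
    Finset.sum_ite_eq, Finset.mem_univ, if_true, mul_sub, Finset.sum_mul]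

lemma lap_mulVec_one (hdiag : ∀ i, w i i = 0) : lap w *ᵥ 1 = 0 := by
  ext i
  simp [lap_mulVec_apply hdiag]

lemma dotProduct_lap_mulVec (hsym : ∀ i j, w i j = w j i) (hdiag : ∀ i, w i i = 0)
    (x : Fin N → ℝ) :
    x ⬝ᵥ (lap w *ᵥ x) = (∑ i, ∑ j, w i j * (x i - x j) ^ 2) / 2 := by
  have hswap : ∑ i, ∑ j, w i j * (x i * (x i - x j))
      = ∑ i, ∑ j, w i j * (x j * (x j - x i)) := by
    rw [Finset.sum_comm]
    simp only [hsym]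
  have hsplit : ∑ i, ∑ j, w i j * (x i - x j) ^ 2
      = ∑ i, ∑ j, w i j * (x i * (x i - x j)) + ∑ i, ∑ j, w i j * (x j * (x j - x i)) := by
    rw [← Finset.sum_add_distrib]
    refine Finset.sum_congr rfl fun i _ => ?_
    rw [← Finset.sum_add_distrib]
    exact Finset.sum_congr rfl fun j _ => by ring
  rw [hsplit, ← hswap, add_self_div_two, dotProduct]
  simp only [lap_mulVec_apply hdiag, Finset.mul_sum]
  exact Finset.sum_congr rfl fun i _ => Finset.sum_congr rfl fun j _ => by ring

lemma isHermitian_lap (hsym : ∀ i j, w i j = w j i) : (lap w).IsHermitian := by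
  ext i j
  by_cases hij : i = j
  · simp [lap, hij]
  · simp [lap, hij, Ne.symm hij, hsym i j]

lemma posSemidef_lap (hsym : ∀ i j, w i j = w j i) (hnn : ∀ i j, 0 ≤ w i j)
    (hdiag : ∀ i, w i i = 0) : (lap w).PosSemidef := by
  refine posSemidef_iff_dotProduct_mulVec.mpr ⟨isHermitian_lap hsym, fun x => ?_⟩
  rw [star_trivial, dotProduct_lap_mulVec hsym hdiag]
  exact div_nonneg (Finset.sum_nonneg fun i _ => Finset.sum_nonneg fun j _ =>
    mul_nonneg (hnn i j) (sq_nonneg _)) zero_le_two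

lemma dotProduct_lap_mulVec_le (hsym : ∀ i j, w i j = w j i) (hnn : ∀ i j, 0 ≤ w i j)
    (hdiag : ∀ i, w i i = 0) {d : ℝ} (hdeg : ∀ i, ∑ j, w i j ≤ d) (Y : Finset (Fin N))
    {x : Fin N → ℝ} {M : ℝ} (hM : ∀ i j, (x i - x j) ^ 2 ≤ M)
    (hY : ∀ i ∉ Y, ∀ j ∉ Y, w i j * (x i - x j) ^ 2 = 0) :
    x ⬝ᵥ (lap w *ᵥ x) ≤ Y.card * d * M := by
  have hM0 : ∀ i : Fin N, 0 ≤ M := fun i => (sq_nonneg _).trans (hM i i)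
  have hterm : ∀ i j, w i j * (x i - x j) ^ 2
      ≤ (if i ∈ Y then M * w i j else 0) + (if j ∈ Y then M * w i j else 0) := by
    intro i j
    have hMw : 0 ≤ M * w i j := mul_nonneg (hM0 i) (hnn i j)
    have hle : w i j * (x i - x j) ^ 2 ≤ M * w i j := by
      rw [mul_comm M]; exact mul_le_mul_of_nonneg_left (hM i j) (hnn i j)
    split_ifs with hi hj hj
    · linarith
    · linarith
    · linarith
    · linarith [hY i hi j hj]
  calc x ⬝ᵥ (lap w *ᵥ x) = (∑ i, ∑ j, w i j * (x i - x j) ^ 2) / 2 :=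
        dotProduct_lap_mulVec hsym hdiag x
    _ ≤ (∑ i, ∑ j,
          ((if i ∈ Y then M * w i j else 0) + (if j ∈ Y then M * w i j else 0))) / 2 := by
        gcongr with i _ j _
        exact hterm i j
    _ = ∑ i ∈ Y, M * ∑ j, w i j := by
        simp only [Finset.sum_add_distrib, Finset.sum_ite_irrel, Finset.sum_const_zero,
          Finset.sum_ite_mem, Finset.univ_inter]
        rw [Finset.sum_comm (s := Finset.univ)]
        simp only [hsym, Finset.mul_sum]
        ring
    _ ≤ ∑ i ∈ Y, M * d :=
        Finset.sum_le_sum fun i _ => mul_le_mul_of_nonneg_left (hdeg i) (hM0 i)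
    _ = Y.card * d * M := by rw [Finset.sum_const, nsmul_eq_mul]; ring

end Laplacian

section CutVector

variable {ι : Type*} [DecidableEq ι] (X₁ X₃ : Finset ι)

noncomputable def cutVector : ι → ℝ := fun i =>
  (if i ∈ X₁ then (X₁.card : ℝ)⁻¹ else 0) - (if i ∈ X₃ then (X₃.card : ℝ)⁻¹ else 0)

variable {X₁ X₃}

lemma sum_cutVector [Fintype ι] (hX₁ : X₁.Nonempty) (hX₃ : X₃.Nonempty) :
    ∑ i, cutVector X₁ X₃ i = 0 := by
  simp [cutVector, Finset.sum_sub_distrib, Finset.sum_ite_mem, hX₁.card_ne_zero, hX₃.card_ne_zero]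

lemma cutVector_dotProduct_self [Fintype ι] (h13 : Disjoint X₁ X₃) :
    cutVector X₁ X₃ ⬝ᵥ cutVector X₁ X₃ = (X₁.card : ℝ)⁻¹ + (X₃.card : ℝ)⁻¹ := by
  have hsq : ∀ i, cutVector X₁ X₃ i * cutVector X₁ X₃ i
      = (if i ∈ X₁ then ((X₁.card : ℝ)⁻¹) ^ 2 else 0)
        + (if i ∈ X₃ then ((X₃.card : ℝ)⁻¹) ^ 2 else 0) := by
    intro i
    by_cases h1 : i ∈ X₁
    · simp [cutVector, h1, Finset.disjoint_left.mp h13 h1, sq]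
    · by_cases h3 : i ∈ X₃ <;> simp [cutVector, h1, h3, sq]
  simp only [dotProduct, hsq, Finset.sum_add_distrib, Finset.sum_ite_mem, Finset.univ_inter,
    Finset.sum_const, nsmul_eq_mul]
  have hcancel (a : ℝ) : a * a⁻¹ ^ 2 = a⁻¹ := by
    rcases eq_or_ne a 0 with rfl | ha
    · simp
    · field_simp
  rw [hcancel, hcancel]

lemma sq_cutVector_sub_le (i j : ι) :
    (cutVector X₁ X₃ i - cutVector X₁ X₃ j) ^ 2 ≤ ((X₁.card : ℝ)⁻¹ + (X₃.card : ℝ)⁻¹) ^ 2 := by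
  have hbounds : ∀ k,
      -(X₃.card : ℝ)⁻¹ ≤ cutVector X₁ X₃ k ∧ cutVector X₁ X₃ k ≤ (X₁.card : ℝ)⁻¹ := by
    intro k
    have h1 : (0 : ℝ) ≤ (X₁.card : ℝ)⁻¹ := by positivity
    have h3 : (0 : ℝ) ≤ (X₃.card : ℝ)⁻¹ := by positivity
    unfold cutVector
    constructor <;> split_ifs <;> linarith
  obtain ⟨hi₁, hi₂⟩ := hbounds i
  obtain ⟨hj₁, hj₂⟩ := hbounds j
  exact sq_le_sq' (by linarith) (by linarith)

end CutVector

lemma sum_le_card_support_mul {ι : Type*} [Fintype ι] {g : ι → ℝ} {c : ℝ} {q : ℕ} (hc : 0 ≤ c)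
    (hle : ∀ j, g j ≤ c) (hcard : (Finset.univ.filter fun j => g j ≠ 0).card ≤ q) :
    ∑ j, g j ≤ q * c := by
  rw [← Finset.sum_filter_ne_zero]
  calc _ ≤ (Finset.univ.filter fun j => g j ≠ 0).card • c :=
        Finset.sum_le_card_nsmul _ _ _ fun j _ => hle j
    _ ≤ q * c := by rw [nsmul_eq_mul]; gcongr

lemma sortedEig_one_le_of_no_edges_between {N : ℕ} (hN : 1 < N)
    {w : Fin N → Fin N → ℝ} (hsym : ∀ i j, w i j = w j i) (hnn : ∀ i j, 0 ≤ w i j)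
    (hdiag : ∀ i, w i i = 0) {d : ℝ} (hdeg : ∀ i, ∑ j, w i j ≤ d) {X₁ X₃ : Finset (Fin N)}
    (h13 : Disjoint X₁ X₃) (hX₁ : X₁.Nonempty) (hX₃ : X₃.Nonempty)
    (hnoedge : ∀ i ∈ X₁, ∀ j ∈ X₃, w i j = 0) (hH : (lap w).IsHermitian) :
    sortedEig hH ⟨1, hN⟩
      ≤ d * ((X₁ ∪ X₃)ᶜ.card / X₁.card + (X₁ ∪ X₃)ᶜ.card / X₃.card) := by
  set f := cutVector X₁ X₃
  set D : ℝ := (X₁.card : ℝ)⁻¹ + (X₃.card : ℝ)⁻¹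
  have hD : 0 < D := by have := hX₁.card_pos; have := hX₃.card_pos; positivity
  have hf₁ : ∀ i ∈ X₁, f i = (X₁.card : ℝ)⁻¹ := fun i hi => by
    simp [f, cutVector, hi, Finset.disjoint_left.mp h13 hi]
  have hf₃ : ∀ i ∈ X₃, f i = -(X₃.card : ℝ)⁻¹ := fun i hi => by
    simp [f, cutVector, hi, Finset.disjoint_right.mp h13 hi]
  have hflat : ∀ i ∉ (X₁ ∪ X₃)ᶜ, ∀ j ∉ (X₁ ∪ X₃)ᶜ, w i j * (f i - f j) ^ 2 = 0 := by
    intro i hi j hj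
    simp only [Finset.mem_compl, not_not, Finset.mem_union] at hi hj
    rcases hi with hi | hi <;> rcases hj with hj | hj
    · simp [hf₁ i hi, hf₁ j hj]
    · simp [hnoedge i hi j hj]
    · simp [hsym i j, hnoedge j hj i hi]
    · simp [hf₃ i hi, hf₃ j hj]
  have hlow := sortedEig_one_mul_le_of_mulVec_eq_zero hH hN (posSemidef_lap hsym hnn hdiag)
    (lap_mulVec_one hdiag) (fun h => one_ne_zero (congr_fun h ⟨0, by omega⟩))
    (by rw [one_dotProduct]; exact sum_cutVector hX₁ hX₃)
  have hup := dotProduct_lap_mulVec_le hsym hnn hdiag hdeg (X₁ ∪ X₃)ᶜ sq_cutVector_sub_le hflat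
  rw [cutVector_dotProduct_self h13] at hlow
  have hμD : sortedEig hH ⟨1, hN⟩ * D ≤ ((X₁ ∪ X₃)ᶜ.card * d * D) * D := by linarith
  calc sortedEig hH ⟨1, hN⟩ ≤ (X₁ ∪ X₃)ᶜ.card * d * D := le_of_mul_le_mul_right hμD hD
    _ = _ := by simp only [D, div_eq_mul_inv]; ring

/-- A family of bounded-degree, bounded-weight graphs with persistent
bottlenecks (N₂/N₁ → 0 and N₂/N₃ → 0) has vanishing algebraic connectivity:
λ₂(G_N) → 0 as N → ∞. -/
theorem stmt3 (q : ℕ) (wmax : ℝ)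
    (sz : ℕ → ℕ) (hsz : ∀ n, 2 ≤ sz n)
    (w : ∀ n, Fin (sz n) → Fin (sz n) → ℝ)
    (hsym : ∀ n i j, w n i j = w n j i) (hnn : ∀ n i j, 0 ≤ w n i j)
    (hdiag : ∀ n i, w n i i = 0)
    (hwmax : ∀ n i j, w n i j ≤ wmax)
    (hdeg : ∀ n i, (Finset.univ.filter fun j => w n i j ≠ 0).card ≤ q)
    (X₁ X₂ X₃ : ∀ n, Finset (Fin (sz n)))
    (h13 : ∀ n, Disjoint (X₁ n) (X₃ n))
    (hcover : ∀ n, X₁ n ∪ X₂ n ∪ X₃ n = Finset.univ)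
    (hN1 : ∀ n, 0 < (X₁ n).card)
    (hN3 : ∀ n, 0 < (X₃ n).card)
    (hnoedge : ∀ n, ∀ i ∈ X₁ n, ∀ j ∈ X₃ n, w n i j = 0)
    (hH : ∀ n, (lap (w n)).IsHermitian)
    (h21 : Tendsto (fun n => ((X₂ n).card : ℝ) / ((X₁ n).card : ℝ)) atTop (nhds 0))
    (h23t : Tendsto (fun n => ((X₂ n).card : ℝ) / ((X₃ n).card : ℝ)) atTop (nhds 0)) :
    Tendsto (fun n => sortedEig (hH n) ⟨1, by have := hsz n; omega⟩) atTop (nhds 0) := by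
  have hbound : ∀ n, sortedEig (hH n) ⟨1, by have := hsz n; omega⟩
      ≤ q * wmax * ((X₂ n).card / (X₁ n).card + (X₂ n).card / (X₃ n).card) := by
    intro n
    obtain ⟨i₀, -⟩ := Finset.card_pos.mp (hN1 n)
    have hwmax0 : 0 ≤ wmax := (hnn n i₀ i₀).trans (hwmax n i₀ i₀)
    have hY : (X₁ n ∪ X₃ n)ᶜ ⊆ X₂ n := fun i hi => by
      have hi' : i ∈ X₁ n ∪ X₂ n ∪ X₃ n := hcover n ▸ Finset.mem_univ i
      simp only [Finset.mem_compl, Finset.mem_union, not_or] at hi hi'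
      tauto
    have hYcard : ((X₁ n ∪ X₃ n)ᶜ.card : ℝ) ≤ (X₂ n).card := by
      exact_mod_cast Finset.card_le_card hY
    calc _ ≤ q * wmax
          * ((X₁ n ∪ X₃ n)ᶜ.card / (X₁ n).card + (X₁ n ∪ X₃ n)ᶜ.card / (X₃ n).card) :=
          sortedEig_one_le_of_no_edges_between _ (hsym n) (hnn n) (hdiag n)
            (fun i => sum_le_card_support_mul hwmax0 (hwmax n i) (hdeg n i)) (h13 n)
            (Finset.card_pos.mp (hN1 n)) (Finset.card_pos.mp (hN3 n)) (hnoedge n) (hH n)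
      _ ≤ _ := by gcongr
  refine squeeze_zero (fun n => ?_) hbound (by simpa using (h21.add h23t).const_mul (q * wmax))
  exact (posSemidef_lap (hsym n) (hnn n) (hdiag n)).eigenvalues_nonneg _
end

section
/- Let L be the weighted Laplacian of a weighted undirected graph on N ≥ 2 vertices in which vertex 1 has at most q neighbors and all edge weights are at most w_max. Then the smallest eigenvalue of the grounded Laplacian L̄ (L with row and column 1 removed) satisfies λ̄₁ ≤ q·w_max/(N−1). -/
/-! Every row of `lap w` sums to `w i i = 0`, so the row of the grounded Laplacian `L̄` indexed by
`i` sums to `w i 0`, and by symmetry `1ᵀ L̄ 1 = ∑ k, w 0 k`: the weighted degree of the grounded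
vertex, which is at most `q · wmax`. As `1ᵀ 1 = M`, the Rayleigh bound `λ_min · xᵀx ≤ xᵀ L̄ x` at
`x = 1` gives the claim. -/

open Matrix

open MatrixOrder in
theorem Matrix.IsHermitian.mul_dotProduct_self_le_dotProduct_mulVec {n : Type*} [Fintype n]
    [DecidableEq n] {A : Matrix n n ℝ} (hA : A.IsHermitian) {c : ℝ}
    (hc : ∀ i, c ≤ hA.eigenvalues i) (x : n → ℝ) :
    c * (x ⬝ᵥ x) ≤ x ⬝ᵥ A *ᵥ x := by
  have hle : algebraMap ℝ _ c ≤ A := by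
    rw [algebraMap_le_iff_le_spectrum (R := ℝ) hA.isSelfAdjoint,
      hA.spectrum_real_eq_range_eigenvalues]
    rintro _ ⟨i, rfl⟩
    exact hc i
  have := (le_iff.mp hle).dotProduct_mulVec_nonneg x
  simpa only [star_trivial, Algebra.algebraMap_eq_smul_one, sub_mulVec, smul_mulVec, one_mulVec,
    dotProduct_sub, dotProduct_smul, smul_eq_mul, sub_nonneg] using this

theorem sortedEig_zero_le_eigenvalues {N : ℕ} {L : Matrix (Fin N) (Fin N) ℝ}
    (hL : L.IsHermitian) (hN : 0 < N) (i : Fin N) :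
    sortedEig hL ⟨0, hN⟩ ≤ hL.eigenvalues i := by
  have hsort : hL.eigenvalues i = sortedEig hL ((Tuple.sort hL.eigenvalues)⁻¹ i) := by
    simp [sortedEig]
  rw [hsort]
  exact Tuple.monotone_sort hL.eigenvalues (Fin.mk_le_of_le_val (Nat.zero_le _))

theorem lap_apply_of_ne {N : ℕ} (w : Fin N → Fin N → ℝ) {i j : Fin N} (h : i ≠ j) :
    lap w i j = -w i j :=
  if_neg h

theorem sum_lap_row {N : ℕ} (w : Fin N → Fin N → ℝ) (i : Fin N) :
    ∑ j, lap w i j = w i i := by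
  have hoff : ∀ j ∈ Finset.univ.erase i, lap w i j = -w i j := fun j hj =>
    lap_apply_of_ne w (Finset.ne_of_mem_erase hj).symm
  rw [← Finset.add_sum_erase _ _ (Finset.mem_univ i), Finset.sum_congr rfl hoff,
    Finset.sum_neg_distrib, lap, of_apply, if_pos rfl,
    ← Finset.add_sum_erase _ _ (Finset.mem_univ i)]
  ring

theorem sum_lap_succ_row {M : ℕ} (w : Fin (M + 1) → Fin (M + 1) → ℝ) (i : Fin M) :
    ∑ j : Fin M, lap w i.succ j.succ = w i.succ i.succ + w i.succ 0 := by
  have hrow := sum_lap_row w i.succ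
  rw [Fin.sum_univ_succ, lap_apply_of_ne w (Fin.succ_ne_zero i)] at hrow
  linarith

theorem sum_sum_lap_submatrix_succ {M : ℕ} {w : Fin (M + 1) → Fin (M + 1) → ℝ}
    (hsym : ∀ i j, w i j = w j i) (hdiag : ∀ i, w i i = 0) :
    ∑ i : Fin M, ∑ j : Fin M, (lap w).submatrix Fin.succ Fin.succ i j = ∑ k, w 0 k := by
  simp only [submatrix_apply, sum_lap_succ_row, hdiag, zero_add, Fin.sum_univ_succ (f := w 0)]
  exact Finset.sum_congr rfl fun i _ => hsym _ _

theorem Finset.sum_le_card_support_nsmul {ι M : Type*} [Fintype ι] [AddCommMonoid M]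
    [DecidableEq M] [PartialOrder M] [IsOrderedAddMonoid M] {f : ι → M} {b : M} (hb : 0 ≤ b)
    (hf : ∀ i, f i ≤ b) {q : ℕ} (hq : (Finset.univ.filter fun i => f i ≠ 0).card ≤ q) :
    ∑ i, f i ≤ q • b := by
  rw [← Finset.sum_filter_ne_zero]
  exact (Finset.sum_le_card_nsmul _ _ _ fun i _ => hf i).trans (nsmul_le_nsmul_left hb hq)

/-- If the grounded vertex (vertex 0) has at most q neighbors and all edge
weights are at most w_max, then the smallest eigenvalue of the grounded
Laplacian satisfies λ̄₁ ≤ q·w_max/(N − 1), where N = M + 1. -/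
theorem stmt5 {M q : ℕ} (hM : 1 ≤ M) (wmax : ℝ)
    (w : Fin (M + 1) → Fin (M + 1) → ℝ)
    (hsym : ∀ i j, w i j = w j i) (hnn : ∀ i j, 0 ≤ w i j)
    (hdiag : ∀ i, w i i = 0)
    (hwmax : ∀ i j, w i j ≤ wmax)
    (hdeg : (Finset.univ.filter fun j => w 0 j ≠ 0).card ≤ q)
    (hH : ((lap w).submatrix Fin.succ Fin.succ).IsHermitian) :
    sortedEig hH ⟨0, by omega⟩ ≤ (q : ℝ) * wmax / (M : ℝ) := by
  have hdegree : ∑ k, w 0 k ≤ q * wmax := by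
    simpa only [nsmul_eq_mul] using
      Finset.sum_le_card_support_nsmul ((hnn 0 0).trans (hwmax 0 0)) (hwmax 0) hdeg
  rw [le_div_iff₀ (by exact_mod_cast hM)]
  calc sortedEig hH ⟨0, by omega⟩ * M = sortedEig hH ⟨0, by omega⟩ * (1 ⬝ᵥ 1) := by simp
    _ ≤ 1 ⬝ᵥ (lap w).submatrix Fin.succ Fin.succ *ᵥ 1 :=
      hH.mul_dotProduct_self_le_dotProduct_mulVec (sortedEig_zero_le_eigenvalues hH _) 1
    _ = ∑ k, w 0 k := by
      simp only [one_dotProduct, mulVec, dotProduct_one, sum_sum_lap_submatrix_succ hsym hdiag]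
    _ ≤ q * wmax := hdegree
end
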